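/- Let S be a family of linear subspaces of X, let a ∈ X, a ≠ 0, and set S_a = {Y ∈ S : a ∈ Y}. Then for every f ∈ E_S(X), the translates x ↦ f(x + ra) converge, uniformly on compact subsets of X as r → +∞, to a function τ_a(f) ∈ E_{S_a}(X) with sup-norm ‖τ_a(f)‖ ≤ ‖f‖; the resulting map τ_a : E_S(X) → E_{S_a}(X) is a unital *-algebra homomorphism, and τ_a(f) = f for every f ∈ E_{S_a}(X), so τ_a is a projection of E_S(X) onto the subalgebra E_{S_a}(X). -/

import Mathlib

open MeasureTheory Metric Filter Topology

noncomputable section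

/-- `X d` is the Euclidean space `ℝ^d` with its standard inner product and norm. -/
abbrev X (d : ℕ) : Type := EuclideanSpace ℝ (Fin d)

/-- `h` is a boundary function for `f` : `f` has uniform radial limits at infinity given
(on the unit sphere) by the continuous function `h`. -/
def IsBoundary {E : Type*} [NormedAddCommGroup E] [InnerProductSpace ℝ E]
    (f : E → ℂ) (h : E → ℂ) : Prop :=
  Continuous h ∧
    ∀ ε > 0, ∃ r > 0, ∀ z : E, r ≤ ‖z‖ → ‖f z - h (‖z‖⁻¹ • z)‖ < ε

/-- `f` has uniform radial limits at infinity. -/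
def HasUniformRadialLimits {E : Type*} [NormedAddCommGroup E] [InnerProductSpace ℝ E]
    (f : E → ℂ) : Prop :=
  ∃ h : E → ℂ, IsBoundary f h

/-- The generating set of the algebra `E_S(X)` : functions of the form `g ∘ π_Y` with `Y ∈ S`
and `g` a bounded continuous function on `Y^⊥` having uniform radial limits at infinity. -/
def projGen {E : Type*} [NormedAddCommGroup E] [InnerProductSpace ℝ E]
    [FiniteDimensional ℝ E] (S : Set (Submodule ℝ E)) :
    Set (BoundedContinuousFunction E ℂ) :=
  { f | ∃ Y ∈ S, ∃ g : BoundedContinuousFunction (↥Yᗮ) ℂ,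
      HasUniformRadialLimits ⇑g ∧ ∀ x : E, f x = g (Yᗮ.orthogonalProjection x) }

/-- `E_S(X)` : the smallest closed unital *-subalgebra of `C_b(X)` containing all `g ∘ π_Y`
with `Y ∈ S` and `g` having uniform radial limits at infinity. -/
def ES {E : Type*} [NormedAddCommGroup E] [InnerProductSpace ℝ E]
    [FiniteDimensional ℝ E] (S : Set (Submodule ℝ E)) :
    StarSubalgebra ℂ (BoundedContinuousFunction E ℂ) :=
  (StarAlgebra.adjoin ℂ (projGen S)).topologicalClosure

/-- The translates `x ↦ f(x + ra)` converge to `g` uniformly on compact subsets of `X`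
as `r → +∞`. -/
def TranslatesTendTo {d : ℕ} (a : X d) (f g : BoundedContinuousFunction (X d) ℂ) : Prop :=
  ∀ C : Set (X d), IsCompact C →
    TendstoUniformlyOn (fun (r : ℝ) (x : X d) => f (x + r • a)) (fun x => g x) atTop C

/-!
Translation by `r • a` followed by the inclusion `C_b(X) → C(X, ℂ)` is a *-homomorphism, and
convergence uniformly on compact sets is convergence in the compact-open topology of `C(X, ℂ)`,
where the algebra operations are continuous. So the functions whose translates converge to a limit
in a closed *-subalgebra `B` form a *-subalgebra. It is closed: the limit map is non-expansive, so
limits of approximants form a Cauchy sequence, and since translation is an isometry of `C_b(X)` the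
two limits can be exchanged. It remains to treat the generators `g ∘ π_Y`. If `a ∈ Y` they are
invariant under translation by `a`. Otherwise `π_Y (x + r • a)` goes to infinity in the direction
of `π_Y a`, uniformly for `x` in a compact set, so the translates converge to the constant
`h (π_Y a / ‖π_Y a‖)` given by the radial limit `h` of `g`.
-/

open BoundedContinuousFunction

lemma uniformContinuous_toContinuousMapStarₐ {α : Type*} [TopologicalSpace α] :
    UniformContinuous (toContinuousMapStarₐ ℂ : (α →ᵇ ℂ) → C(α, ℂ)) := by
  refine (Metric.uniformity_basis_dist.uniformContinuous_iff
    ContinuousMap.hasBasis_compactConvergenceUniformity).mpr ?_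
  rintro ⟨K, V⟩ ⟨-, hV⟩
  obtain ⟨ε, hε, hεV⟩ := Metric.mem_uniformity_dist.mp hV
  exact ⟨ε, hε, fun f g hfg x _ => hεV ((dist_coe_le_dist x).trans_lt hfg)⟩

section Translation

variable {E : Type*} [NormedAddCommGroup E] [NormedSpace ℝ E]

def translateₐ (a : E) (r : ℝ) : (E →ᵇ ℂ) →⋆ₐ[ℂ] C(E, ℂ) :=
  (ContinuousMap.compStarAlgHom' ℂ ℂ (ContinuousMap.addRight (r • a))).comp
    (toContinuousMapStarₐ ℂ)

@[simp]
lemma translateₐ_apply (a : E) (r : ℝ) (f : E →ᵇ ℂ) (x : E) :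
    translateₐ a r f x = f (x + r • a) :=
  rfl

def HasTranslationLimit (a : E) (f g : E →ᵇ ℂ) : Prop :=
  Tendsto (fun r : ℝ => translateₐ a r f) atTop (𝓝 (toContinuousMapStarₐ ℂ g))

lemma hasTranslationLimit_iff {a : E} {f g : E →ᵇ ℂ} :
    HasTranslationLimit a f g ↔ ∀ K : Set E, IsCompact K →
      TendstoUniformlyOn (fun (r : ℝ) (x : E) => f (x + r • a)) g atTop K :=
  ContinuousMap.tendsto_iff_forall_isCompact_tendstoUniformlyOn

namespace HasTranslationLimit

variable {a : E} {f f₁ f₂ g g₁ g₂ : E →ᵇ ℂ}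

lemma tendsto_apply (h : HasTranslationLimit a f g) (x : E) :
    Tendsto (fun r : ℝ => f (x + r • a)) atTop (𝓝 (g x)) :=
  ((continuous_eval_const x).tendsto _).comp h

lemma unique (h₁ : HasTranslationLimit a f g₁) (h₂ : HasTranslationLimit a f g₂) : g₁ = g₂ :=
  ext fun x => tendsto_nhds_unique (h₁.tendsto_apply x) (h₂.tendsto_apply x)

lemma norm_le (h : HasTranslationLimit a f g) : ‖g‖ ≤ ‖f‖ :=
  (BoundedContinuousFunction.norm_le (norm_nonneg f)).mpr fun x =>
    le_of_tendsto (h.tendsto_apply x).norm (.of_forall fun _ => f.norm_coe_le_norm _)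

lemma add (h₁ : HasTranslationLimit a f₁ g₁) (h₂ : HasTranslationLimit a f₂ g₂) :
    HasTranslationLimit a (f₁ + f₂) (g₁ + g₂) := by
  simpa only [HasTranslationLimit, map_add] using Tendsto.add h₁ h₂

lemma sub (h₁ : HasTranslationLimit a f₁ g₁) (h₂ : HasTranslationLimit a f₂ g₂) :
    HasTranslationLimit a (f₁ - f₂) (g₁ - g₂) := by
  simpa only [HasTranslationLimit, map_sub] using Tendsto.sub h₁ h₂

lemma mul [LocallyCompactSpace E] (h₁ : HasTranslationLimit a f₁ g₁)
    (h₂ : HasTranslationLimit a f₂ g₂) : HasTranslationLimit a (f₁ * f₂) (g₁ * g₂) := by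
  simpa only [HasTranslationLimit, map_mul] using Tendsto.mul h₁ h₂

lemma star (h : HasTranslationLimit a f g) :
    HasTranslationLimit a (Star.star f) (Star.star g) := by
  have hstar : Continuous (Star.star : C(E, ℂ) → C(E, ℂ)) :=
    ContinuousMap.continuous_postcomp ⟨_, continuous_star⟩
  simpa only [HasTranslationLimit, map_star, Function.comp_def] using (hstar.tendsto _).comp h

lemma algebraMap (c : ℂ) :
    HasTranslationLimit a (algebraMap ℂ (E →ᵇ ℂ) c) (algebraMap ℂ (E →ᵇ ℂ) c) := by
  simpa only [HasTranslationLimit, AlgHomClass.commutes] using tendsto_const_nhds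

lemma dist_le (h₁ : HasTranslationLimit a f₁ g₁) (h₂ : HasTranslationLimit a f₂ g₂) :
    dist g₁ g₂ ≤ dist f₁ f₂ := by
  simpa only [dist_eq_norm] using (h₁.sub h₂).norm_le

lemma of_tendsto {u v : ℕ → E →ᵇ ℂ} (h : ∀ n, HasTranslationLimit a (u n) (v n))
    (hu : Tendsto u atTop (𝓝 f)) (hv : Tendsto v atTop (𝓝 g)) : HasTranslationLimit a f g := by
  let shift (r : ℝ) : C(E, E) := ContinuousMap.addRight (r • a)
  -- Translation is an isometry of `E →ᵇ ℂ`, so the translates converge uniformly in `r`.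
  have hunif : TendstoUniformly (fun n r => (u n).compContinuous (shift r))
      (fun r => f.compContinuous (shift r)) atTop := by
    refine Metric.tendstoUniformly_iff.mpr fun ε hε => ?_
    filter_upwards [Metric.tendsto_nhds.mp hu ε hε] with n hn r
    rw [dist_comm] at hn
    exact ((lipschitz_compContinuous _).dist_le_mul f (u n)).trans_lt (by simpa using hn)
  have hι := uniformContinuous_toContinuousMapStarₐ (α := E)
  exact (hι.comp_tendstoUniformly hunif).tendsto_of_eventually_tendsto (.of_forall h)
    ((hι.continuous.tendsto g).comp hv)

end HasTranslationLimit

end Translation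

section Subalgebras

variable {E : Type*} [NormedAddCommGroup E] [NormedSpace ℝ E] [LocallyCompactSpace E]

def translationLimitSubalgebra (a : E) (B : StarSubalgebra ℂ (E →ᵇ ℂ)) :
    StarSubalgebra ℂ (E →ᵇ ℂ) where
  carrier := {f | ∃ g ∈ B, HasTranslationLimit a f g}
  mul_mem' := fun ⟨g₁, hg₁, h₁⟩ ⟨g₂, hg₂, h₂⟩ => ⟨g₁ * g₂, mul_mem hg₁ hg₂, h₁.mul h₂⟩
  add_mem' := fun ⟨g₁, hg₁, h₁⟩ ⟨g₂, hg₂, h₂⟩ => ⟨g₁ + g₂, add_mem hg₁ hg₂, h₁.add h₂⟩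
  algebraMap_mem' c := ⟨_, B.algebraMap_mem c, .algebraMap c⟩
  star_mem' := fun ⟨g, hg, h⟩ => ⟨star g, star_mem hg, h.star⟩

def selfTranslationLimitSubalgebra (a : E) : StarSubalgebra ℂ (E →ᵇ ℂ) where
  carrier := {f | HasTranslationLimit a f f}
  mul_mem' := HasTranslationLimit.mul
  add_mem' := HasTranslationLimit.add
  algebraMap_mem' := HasTranslationLimit.algebraMap
  star_mem' := HasTranslationLimit.star

lemma isClosed_translationLimitSubalgebra (a : E) {B : StarSubalgebra ℂ (E →ᵇ ℂ)}
    (hB : IsClosed (B : Set (E →ᵇ ℂ))) :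
    IsClosed (translationLimitSubalgebra a B : Set (E →ᵇ ℂ)) := by
  refine IsSeqClosed.isClosed fun u f hu hlim => ?_
  choose v hvB hv using hu
  have hv_cauchy : CauchySeq v := Metric.cauchySeq_iff.mpr fun ε hε =>
    (Metric.cauchySeq_iff.mp hlim.cauchySeq ε hε).imp fun _ hN m hm n hn =>
      ((hv m).dist_le (hv n)).trans_lt (hN m hm n hn)
  obtain ⟨g, hg⟩ := cauchySeq_tendsto_of_complete hv_cauchy
  exact ⟨g, hB.mem_of_tendsto hg (.of_forall hvB), .of_tendsto hv hlim hg⟩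

lemma isClosed_selfTranslationLimitSubalgebra (a : E) :
    IsClosed (selfTranslationLimitSubalgebra a : Set (E →ᵇ ℂ)) :=
  IsSeqClosed.isClosed fun _ _ hu hlim => .of_tendsto hu hlim hlim

end Subalgebras

open NormedSpace in
lemma IsBoundary.tendsto_add_smul {F : Type*} [NormedAddCommGroup F] [InnerProductSpace ℝ F]
    {g h : F → ℂ} (hgh : IsBoundary g h) {b : F} (hb : b ≠ 0) {K : Set F}
    (hK : Bornology.IsBounded K) :
    Tendsto (fun q : ℝ × F => g (q.2 + q.1 • b)) (atTop ×ˢ 𝓟 K) (𝓝 (h (normalize b))) := by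
  -- Everything follows from `q.1⁻¹ • (q.2 + q.1 • b) → b`, as `q.2` stays bounded.
  have hpos : ∀ᶠ q : ℝ × F in atTop ×ˢ 𝓟 K, 0 < q.1 :=
    tendsto_fst.eventually (eventually_gt_atTop 0)
  have hrescaled : Tendsto (fun q : ℝ × F => q.1⁻¹ • (q.2 + q.1 • b)) (atTop ×ˢ 𝓟 K) (𝓝 b) := by
    obtain ⟨M, hM⟩ := hK.exists_norm_le
    have hbdd : IsBoundedUnder (· ≤ ·) (atTop ×ˢ 𝓟 K) (norm ∘ Prod.snd : ℝ × F → ℝ) :=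
      ⟨M, eventually_map.mpr <| tendsto_snd.eventually (eventually_principal.mpr hM)⟩
    have hlim := ((tendsto_inv_atTop_zero.comp tendsto_fst).zero_smul_isBoundedUnder_le
      hbdd).add_const b
    rw [zero_add] at hlim
    refine hlim.congr' ?_
    filter_upwards [hpos] with q hq
    simp [smul_add, smul_smul, inv_mul_cancel₀ hq.ne']
  have hnorm : Tendsto (fun q : ℝ × F => ‖q.2 + q.1 • b‖) (atTop ×ˢ 𝓟 K) atTop := by
    refine (tendsto_fst.atTop_mul_pos (norm_pos_iff.mpr hb) hrescaled.norm).congr' ?_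
    filter_upwards [hpos] with q hq
    change q.1 * ‖q.1⁻¹ • (q.2 + q.1 • b)‖ = _
    rw [norm_smul, Real.norm_of_nonneg (inv_nonneg.mpr hq.le), mul_inv_cancel_left₀ hq.ne']
  have hdir : Tendsto (fun q : ℝ × F => normalize (q.2 + q.1 • b)) (atTop ×ˢ 𝓟 K)
      (𝓝 (normalize b)) := by
    refine ((hrescaled.norm.inv₀ (norm_ne_zero_iff.mpr hb)).smul hrescaled).congr' ?_
    filter_upwards [hpos] with q hq
    exact normalize_smul_of_pos (inv_pos.mpr hq) _
  have herr : Tendsto (fun q : ℝ × F => g (q.2 + q.1 • b) - h (normalize (q.2 + q.1 • b)))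
      (atTop ×ˢ 𝓟 K) (𝓝 0) := by
    refine Metric.tendsto_nhds.mpr fun ε hε => ?_
    obtain ⟨R, -, hR⟩ := hgh.2 ε hε
    filter_upwards [hnorm.eventually_ge_atTop R] with q hq
    rw [dist_zero_right]
    exact hR _ hq
  simpa using herr.add ((hgh.1.tendsto _).comp hdir)

section TranslationLimitHom

variable {E : Type*} [NormedAddCommGroup E] [NormedSpace ℝ E] [LocallyCompactSpace E]
  {a : E} {B : StarSubalgebra ℂ (E →ᵇ ℂ)}

def translationLimit (f : translationLimitSubalgebra a B) : E →ᵇ ℂ :=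
  f.2.choose

lemma translationLimit_mem (f : translationLimitSubalgebra a B) : translationLimit f ∈ B :=
  f.2.choose_spec.1

lemma hasTranslationLimit_translationLimit (f : translationLimitSubalgebra a B) :
    HasTranslationLimit a f (translationLimit f) :=
  f.2.choose_spec.2

lemma translationLimit_eq {f : translationLimitSubalgebra a B} {g : E →ᵇ ℂ}
    (h : HasTranslationLimit a f g) : translationLimit f = g :=
  (hasTranslationLimit_translationLimit f).unique h

variable (a B) in
def translationLimitHom : translationLimitSubalgebra a B →⋆ₐ[ℂ] (E →ᵇ ℂ) where
  toFun := translationLimit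
  map_one' := translationLimit_eq (by simpa using HasTranslationLimit.algebraMap (a := a) 1)
  map_mul' f g := translationLimit_eq <|
    (hasTranslationLimit_translationLimit f).mul (hasTranslationLimit_translationLimit g)
  map_zero' := translationLimit_eq (by simpa using HasTranslationLimit.algebraMap (a := a) 0)
  map_add' f g := translationLimit_eq <|
    (hasTranslationLimit_translationLimit f).add (hasTranslationLimit_translationLimit g)
  commutes' c := translationLimit_eq (.algebraMap c)
  map_star' f := translationLimit_eq (hasTranslationLimit_translationLimit f).star

end TranslationLimitHom

section ProjectionGenerated

open NormedSpace

variable {E : Type*} [NormedAddCommGroup E] [InnerProductSpace ℝ E] [FiniteDimensional ℝ E]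
  {a : E} {Y : Submodule ℝ E} {f : E →ᵇ ℂ} {g : Yᗮ →ᵇ ℂ}

lemma hasTranslationLimit_self_of_mem (haY : a ∈ Y)
    (hfg : ∀ x, f x = g (Yᗮ.orthogonalProjectionOnto x)) : HasTranslationLimit a f f := by
  have hinvariant : ∀ r : ℝ, translateₐ a r f = toContinuousMapStarₐ ℂ f := fun r =>
    ContinuousMap.ext fun x => by
      simp [hfg, Submodule.orthogonalProjectionOnto_orthogonal_apply_eq_zero haY]
  simpa only [HasTranslationLimit, hinvariant] using tendsto_const_nhds

lemma hasTranslationLimit_algebraMap_of_notMem (haY : a ∉ Y) {h : Yᗮ → ℂ} (hgh : IsBoundary g h)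
    (hfg : ∀ x, f x = g (Yᗮ.orthogonalProjectionOnto x)) :
    HasTranslationLimit a f
      (algebraMap ℂ (E →ᵇ ℂ) (h (normalize (Yᗮ.orthogonalProjectionOnto a)))) := by
  set π := Yᗮ.orthogonalProjectionOnto
  have hπa : π a ≠ 0 := by
    rwa [Ne, Submodule.orthogonalProjectionOnto_eq_zero_iff, Submodule.orthogonal_orthogonal]
  refine hasTranslationLimit_iff.mpr fun C hC => ?_
  have hlim := (hgh.tendsto_add_smul hπa (hC.image π.continuous).isBounded).comp
    (tendsto_id.prodMap (tendsto_principal_principal.mpr fun x hx => Set.mem_image_of_mem π hx))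
  -- A limit along `atTop ×ˢ 𝓟 C` is a uniform limit on `C` of functions of `(r, x)`.
  rw [nhds_eq_comap_uniformity, tendsto_comap_iff] at hlim
  rw [tendstoUniformlyOn_iff_tendsto]
  refine hlim.congr fun q => ?_
  simp [hfg, π]

variable (a) in
lemma projGen_subset_translationLimitSubalgebra (S : Set (Submodule ℝ E)) :
    projGen S ⊆ translationLimitSubalgebra a (ES {Y ∈ S | a ∈ Y}) := by
  rintro f ⟨Y, hY, g, ⟨h, hgh⟩, hfg⟩
  by_cases haY : a ∈ Y
  · exact ⟨f, StarSubalgebra.le_topologicalClosure _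
      (StarAlgebra.subset_adjoin ℂ _ ⟨Y, ⟨hY, haY⟩, g, ⟨h, hgh⟩, hfg⟩),
      hasTranslationLimit_self_of_mem haY hfg⟩
  · exact ⟨_, (ES _).algebraMap_mem _, hasTranslationLimit_algebraMap_of_notMem haY hgh hfg⟩

variable (a) in
lemma ES_le_translationLimitSubalgebra (S : Set (Submodule ℝ E)) :
    ES S ≤ translationLimitSubalgebra a (ES {Y ∈ S | a ∈ Y}) :=
  StarSubalgebra.topologicalClosure_minimal
    (StarAlgebra.adjoin_le (projGen_subset_translationLimitSubalgebra a S))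
    (isClosed_translationLimitSubalgebra a (StarSubalgebra.isClosed_topologicalClosure _))

variable (a) in
lemma ES_le_selfTranslationLimitSubalgebra (S : Set (Submodule ℝ E)) :
    ES {Y ∈ S | a ∈ Y} ≤ selfTranslationLimitSubalgebra a := by
  refine StarSubalgebra.topologicalClosure_minimal (StarAlgebra.adjoin_le ?_)
    (isClosed_selfTranslationLimitSubalgebra a)
  rintro f ⟨Y, ⟨-, haY⟩, g, -, hfg⟩
  exact hasTranslationLimit_self_of_mem haY hfg

end ProjectionGenerated

lemma translatesTendTo_iff_hasTranslationLimit {d : ℕ} {a : X d} {f g : X d →ᵇ ℂ} :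
    TranslatesTendTo a f g ↔ HasTranslationLimit a f g :=
  hasTranslationLimit_iff.symm

theorem exists_tau_general (d : ℕ) (S : Set (Submodule ℝ (X d)))
    (a : X d) :
    ∃ τ : ↥(ES S) →⋆ₐ[ℂ] BoundedContinuousFunction (X d) ℂ,
      ∀ f : ↥(ES S),
        τ f ∈ ES {Y ∈ S | a ∈ Y} ∧
        TranslatesTendTo a (↑f) (τ f) ∧
        ‖τ f‖ ≤ ‖f‖ ∧
        ((f : BoundedContinuousFunction (X d) ℂ) ∈ ES {Y ∈ S | a ∈ Y} → τ f = ↑f) := by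
  refine ⟨(translationLimitHom a _).comp
    (StarSubalgebra.inclusion (ES_le_translationLimitSubalgebra a S)), fun f => ?_⟩
  have hlim := hasTranslationLimit_translationLimit
    (StarSubalgebra.inclusion (ES_le_translationLimitSubalgebra a S) f)
  exact ⟨translationLimit_mem _, translatesTendTo_iff_hasTranslationLimit.mpr hlim, hlim.norm_le,
    fun hf => translationLimit_eq (ES_le_selfTranslationLimitSubalgebra a S hf)⟩

/-- Let `S` be a family of linear subspaces of `X`, `a ≠ 0`, and `S_a = {Y ∈ S : a ∈ Y}`.
For every `f ∈ E_S(X)` the translates `x ↦ f(x + ra)` converge, uniformly on compact sets as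
`r → +∞`, to a function `τ_a(f) ∈ E_{S_a}(X)` with `‖τ_a(f)‖ ≤ ‖f‖`; the resulting map
`τ_a : E_S(X) → E_{S_a}(X)` is a unital *-algebra homomorphism which restricts to the
identity on `E_{S_a}(X)`, so `τ_a` is a projection of `E_S(X)` onto `E_{S_a}(X)`. -/
theorem exists_tau (d : ℕ) (hd : 1 ≤ d) (S : Set (Submodule ℝ (X d)))
    (a : X d) (ha : a ≠ 0) :
    ∃ τ : ↥(ES S) →⋆ₐ[ℂ] BoundedContinuousFunction (X d) ℂ,
      ∀ f : ↥(ES S),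
        τ f ∈ ES {Y ∈ S | a ∈ Y} ∧
        TranslatesTendTo a (↑f) (τ f) ∧
        ‖τ f‖ ≤ ‖f‖ ∧
        ((f : BoundedContinuousFunction (X d) ℂ) ∈ ES {Y ∈ S | a ∈ Y} → τ f = ↑f) :=
  exists_tau_general d S a
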